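/- Let n ≥ 3, 1 ≤ q ≤ n-2, l ≥ 2(q+1)+1 an integer, h holomorphic near the closed unit disk, s = |z|², w = t + is, and u_h = h(w) (z^n)^l s^{-(q+1)} ξ^J with J = {1,…,q+1}. Then, with □_b computed componentwise by the Folland–Stein formula □_b(f_{\bar I} d\bar z^I) = -Σ_{k∉I} L_k \bar L_k f_{\bar I} d\bar z^I - Σ_{k∈I} \bar L_k L_k f_{\bar I} d\bar z^I, one has □_b u_h = ((q+1)(n+l-q-1)/s) · u_h on {s > 0}. -/

import Mathlib

/-!
`L_j` and `\bar L_j` act at a point as `ℂ`-linear functionals of the real differential, hence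
as derivations, and on the generators they give `L_j s = \bar z^j`, `\bar L_j s = z^j`,
`L_j w = 2i \bar z^j`, `\bar L_j w = 0`. Write `F_e = h(w) (z^n)^l s^e \bar z^k` and `F'_e` for
the same expression with `h'` in place of `h`. Computing `L_m \bar L_m F_e` and
`\bar L_m L_m F_e` directly and summing, the terms in `|z^m|^2` add up to multiples of `s`,
and one gets, for every exponent `e`,
  `□_b F_e = -(e (n + l + e) F_{e-1} + 2i (q + 1 + e) F'_e)`.
The `h'`-term vanishes exactly for `e = -(q+1)`, and
`F_{e-1} = F_e / s` leaves the eigenvalue `(q+1)(n+l-q-1)/s`.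
-/

open Complex

noncomputable section

/-- The Heisenberg group `ℍⁿ = ℝ_t × ℂⁿ_z` as a manifold. -/
abbrev Heis (n : ℕ) := ℝ × (Fin n → ℂ)

/-- Directional derivative of `f` at `p` in the (real) direction `v`. -/
def dirDeriv {n : ℕ} (v : Heis n) (f : Heis n → ℂ) (p : Heis n) : ℂ := fderiv ℝ f p v

/-- `∂_t`. -/
def Dt {n : ℕ} (f : Heis n → ℂ) : Heis n → ℂ := dirDeriv (1, 0)  f

/-- `∂_{x^j}` where `z^j = x^j + i y^j`. -/
def Dx {n : ℕ} (j : Fin n) (f : Heis n → ℂ) : Heis n → ℂ := dirDeriv (0, Pi.single j 1) f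

/-- `∂_{y^j}`. -/
def Dy {n : ℕ} (j : Fin n) (f : Heis n → ℂ) : Heis n → ℂ := dirDeriv (0, Pi.single j I) f

/-- The Wirtinger derivative `∂_{z^j} = (∂_{x^j} - i ∂_{y^j})/2`. -/
def Dz {n : ℕ} (j : Fin n) (f : Heis n → ℂ) (p : Heis n) : ℂ := (Dx j f p - I * Dy j f p) / 2

/-- The Wirtinger derivative `∂_{\bar z^j} = (∂_{x^j} + i ∂_{y^j})/2`. -/
def Dzbar {n : ℕ} (j : Fin n) (f : Heis n → ℂ) (p : Heis n) : ℂ := (Dx j f p + I * Dy j f p) / 2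

/-- The CR vector field `L_j = ∂_{z^j} + i \bar z^j ∂_t`. -/
def Lop {n : ℕ} (j : Fin n) (f : Heis n → ℂ) (p : Heis n) : ℂ :=
  Dz j f p + I * (starRingEnd ℂ) (p.2 j) * Dt f p

/-- The conjugate CR vector field `\bar L_j = ∂_{\bar z^j} - i z^j ∂_t`. -/
def Lbar {n : ℕ} (j : Fin n) (f : Heis n → ℂ) (p : Heis n) : ℂ :=
  Dzbar j f p - I * (p.2 j) * Dt f p

/-- `s = |z|²`. -/
def sF {n : ℕ} (p : Heis n) : ℝ := ∑ j, Complex.normSq (p.2 j)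

/-- `w = t + i s`. -/
def wF {n : ℕ} (p : Heis n) : ℂ := (p.1 : ℂ) + I * (sF p : ℂ)

open ComplexConjugate

section ApplyFDeriv

variable {E : Type*} [NormedAddCommGroup E] [NormedSpace ℝ E]
  (Φ : (E →L[ℝ] ℂ) →ₗ[ℂ] ℂ) {f g : E → ℂ} {p : E}

theorem map_fderiv_add (hf : DifferentiableAt ℝ f p) (hg : DifferentiableAt ℝ g p) :
    Φ (fderiv ℝ (fun x => f x + g x) p) = Φ (fderiv ℝ f p) + Φ (fderiv ℝ g p) := by
  rw [fderiv_fun_add hf hg, map_add]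

theorem map_fderiv_mul (hf : DifferentiableAt ℝ f p) (hg : DifferentiableAt ℝ g p) :
    Φ (fderiv ℝ (fun x => f x * g x) p)
      = Φ (fderiv ℝ f p) * g p + f p * Φ (fderiv ℝ g p) := by
  rw [fderiv_fun_mul hf hg, map_add, map_smul, map_smul, smul_eq_mul, smul_eq_mul]
  ring

theorem map_fderiv_const_mul (c : ℂ) (hf : DifferentiableAt ℝ f p) :
    Φ (fderiv ℝ (fun x => c * f x) p) = c * Φ (fderiv ℝ f p) := by
  rw [fderiv_const_mul hf, map_smul, smul_eq_mul]

theorem map_fderiv_comp {φ : ℂ → ℂ} (hφ : DifferentiableAt ℂ φ (f p))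
    (hf : DifferentiableAt ℝ f p) :
    Φ (fderiv ℝ (fun x => φ (f x)) p) = deriv φ (f p) * Φ (fderiv ℝ f p) := by
  rw [← Function.comp_def, (hφ.hasDerivAt.comp_hasFDerivAt p hf.hasFDerivAt).fderiv, map_smul,
    smul_eq_mul]

theorem map_fderiv_sum {ι : Type*} (s : Finset ι) {f : ι → E → ℂ}
    (hf : ∀ i ∈ s, DifferentiableAt ℝ (f i) p) :
    Φ (fderiv ℝ (fun x => ∑ i ∈ s, f i x) p) = ∑ i ∈ s, Φ (fderiv ℝ (f i) p) := by
  rw [fderiv_fun_sum hf, map_sum]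

end ApplyFDeriv

theorem card_filter_val_lt_and_ne {n q : ℕ} {k : Fin n} (hk : (k : ℕ) < q + 1)
    (hq : q + 1 ≤ n) :
    (Finset.univ.filter fun m : Fin n => (m : ℕ) < q + 1 ∧ m ≠ k).card = q := by
  have hJ : (Finset.univ.filter fun m : Fin n => (m : ℕ) < q + 1 ∧ m ≠ k)
      = (Finset.univ.filter fun m : Fin n => (m : ℕ) < q + 1).erase k := by
    ext m
    simp [and_comm]
  rw [hJ, Finset.card_erase_of_mem (by simp; omega), Fin.card_filter_val_lt]
  omega

variable {n : ℕ}

def lopFunctional (m : Fin n) (p : Heis n) : (Heis n →L[ℝ] ℂ) →ₗ[ℂ] ℂ where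
  toFun A := (A (0, Pi.single m 1) - I * A (0, Pi.single m I)) / 2 + I * conj (p.2 m) * A (1, 0)
  map_add' _ _ := by simp only [FunLike.coe_add, Pi.add_apply]; ring
  map_smul' _ _ := by
    simp only [FunLike.coe_smul, Pi.smul_apply, smul_eq_mul, RingHom.id_apply]; ring

def lbarFunctional (m : Fin n) (p : Heis n) : (Heis n →L[ℝ] ℂ) →ₗ[ℂ] ℂ where
  toFun A := (A (0, Pi.single m 1) + I * A (0, Pi.single m I)) / 2 - I * p.2 m * A (1, 0)
  map_add' _ _ := by simp only [FunLike.coe_add, Pi.add_apply]; ring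
  map_smul' _ _ := by
    simp only [FunLike.coe_smul, Pi.smul_apply, smul_eq_mul, RingHom.id_apply]; ring

theorem Lop_eq_lopFunctional (m : Fin n) (f : Heis n → ℂ) (p : Heis n) :
    Lop m f p = lopFunctional m p (fderiv ℝ f p) := by
  simp [Lop, Dz, Dx, Dy, Dt, dirDeriv, lopFunctional]

theorem Lbar_eq_lbarFunctional (m : Fin n) (f : Heis n → ℂ) (p : Heis n) :
    Lbar m f p = lbarFunctional m p (fderiv ℝ f p) := by
  simp [Lbar, Dzbar, Dx, Dy, Dt, dirDeriv, lbarFunctional]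

section CRRules

variable {m : Fin n} {f g : Heis n → ℂ} {p : Heis n}

theorem Lop_add (hf : DifferentiableAt ℝ f p) (hg : DifferentiableAt ℝ g p) :
    Lop m (fun x => f x + g x) p = Lop m f p + Lop m g p := by
  simp only [Lop_eq_lopFunctional, map_fderiv_add _ hf hg]

theorem Lbar_add (hf : DifferentiableAt ℝ f p) (hg : DifferentiableAt ℝ g p) :
    Lbar m (fun x => f x + g x) p = Lbar m f p + Lbar m g p := by
  simp only [Lbar_eq_lbarFunctional, map_fderiv_add _ hf hg]

theorem Lop_mul (hf : DifferentiableAt ℝ f p) (hg : DifferentiableAt ℝ g p) :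
    Lop m (fun x => f x * g x) p = Lop m f p * g p + f p * Lop m g p := by
  simp only [Lop_eq_lopFunctional, map_fderiv_mul _ hf hg]

theorem Lbar_mul (hf : DifferentiableAt ℝ f p) (hg : DifferentiableAt ℝ g p) :
    Lbar m (fun x => f x * g x) p = Lbar m f p * g p + f p * Lbar m g p := by
  simp only [Lbar_eq_lbarFunctional, map_fderiv_mul _ hf hg]

theorem Lop_const_mul (c : ℂ) (hf : DifferentiableAt ℝ f p) :
    Lop m (fun x => c * f x) p = c * Lop m f p := by
  simp only [Lop_eq_lopFunctional, map_fderiv_const_mul _ c hf]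

theorem Lbar_const_mul (c : ℂ) (hf : DifferentiableAt ℝ f p) :
    Lbar m (fun x => c * f x) p = c * Lbar m f p := by
  simp only [Lbar_eq_lbarFunctional, map_fderiv_const_mul _ c hf]

theorem Lop_comp {φ : ℂ → ℂ} (hφ : DifferentiableAt ℂ φ (f p))
    (hf : DifferentiableAt ℝ f p) :
    Lop m (fun x => φ (f x)) p = deriv φ (f p) * Lop m f p := by
  simp only [Lop_eq_lopFunctional, map_fderiv_comp _ hφ hf]

theorem Lbar_comp {φ : ℂ → ℂ} (hφ : DifferentiableAt ℂ φ (f p))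
    (hf : DifferentiableAt ℝ f p) :
    Lbar m (fun x => φ (f x)) p = deriv φ (f p) * Lbar m f p := by
  simp only [Lbar_eq_lbarFunctional, map_fderiv_comp _ hφ hf]

theorem Lop_sum {ι : Type*} (s : Finset ι) {f : ι → Heis n → ℂ}
    (hf : ∀ i ∈ s, DifferentiableAt ℝ (f i) p) :
    Lop m (fun x => ∑ i ∈ s, f i x) p = ∑ i ∈ s, Lop m (f i) p := by
  simp only [Lop_eq_lopFunctional, map_fderiv_sum _ s hf]

theorem Lbar_sum {ι : Type*} (s : Finset ι) {f : ι → Heis n → ℂ}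
    (hf : ∀ i ∈ s, DifferentiableAt ℝ (f i) p) :
    Lbar m (fun x => ∑ i ∈ s, f i x) p = ∑ i ∈ s, Lbar m (f i) p := by
  simp only [Lbar_eq_lbarFunctional, map_fderiv_sum _ s hf]

theorem Lop_congr (hfg : f =ᶠ[nhds p] g) : Lop m f p = Lop m g p := by
  simp only [Lop_eq_lopFunctional, hfg.fderiv_eq]

theorem Lbar_congr (hfg : f =ᶠ[nhds p] g) : Lbar m f p = Lbar m g p := by
  simp only [Lbar_eq_lbarFunctional, hfg.fderiv_eq]

end CRRules

theorem ofReal_sF (x : Heis n) : (sF x : ℂ) = ∑ j, x.2 j * conj (x.2 j) := by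
  simp only [sF, ofReal_sum, mul_conj]

attribute [fun_prop] Complex.differentiable_ofReal

@[fun_prop]
theorem differentiable_sF : Differentiable ℝ (sF (n := n)) := by
  unfold sF
  simp only [normSq_apply]
  fun_prop

@[fun_prop]
theorem differentiable_wF : Differentiable ℝ (wF (n := n)) := by
  unfold wF
  fun_prop

theorem differentiableAt_ofReal_sF_zpow (e : ℤ) {x : Heis n} (hx : sF x ≠ 0) :
    DifferentiableAt ℝ (fun y => (sF y : ℂ) ^ e) x := by
  have hzpow : DifferentiableAt ℝ (fun z : ℂ => z ^ e) (sF x) :=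
    (differentiableAt_zpow.mpr (Or.inl (ofReal_ne_zero.mpr hx))).restrictScalars ℝ
  exact hzpow.comp (f := fun y : Heis n => (sF y : ℂ)) x (by fun_prop)

def coordCLM (j : Fin n) : Heis n →L[ℝ] ℂ :=
  (ContinuousLinearMap.proj j).comp (ContinuousLinearMap.snd ℝ ℝ (Fin n → ℂ))

section Generators

variable (m j : Fin n) (p : Heis n)

theorem Lop_clm (A : Heis n →L[ℝ] ℂ) : Lop m A p = lopFunctional m p A := by
  rw [Lop_eq_lopFunctional, A.fderiv]

theorem Lbar_clm (A : Heis n →L[ℝ] ℂ) : Lbar m A p = lbarFunctional m p A := by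
  rw [Lbar_eq_lbarFunctional, A.fderiv]

theorem Lop_coord : Lop m (fun x => x.2 j) p = if j = m then 1 else 0 := by
  rw [show (fun x : Heis n => x.2 j) = coordCLM j from rfl, Lop_clm]
  by_cases h : j = m <;> simp [coordCLM, lopFunctional, h]

theorem Lbar_coord : Lbar m (fun x => x.2 j) p = 0 := by
  rw [show (fun x : Heis n => x.2 j) = coordCLM j from rfl, Lbar_clm]
  by_cases h : j = m <;> simp [coordCLM, lbarFunctional, h]

theorem Lop_conj_coord : Lop m (fun x => conj (x.2 j)) p = 0 := by
  rw [show (fun x : Heis n => conj (x.2 j)) = conjCLE.toContinuousLinearMap.comp (coordCLM j)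
    from rfl, Lop_clm]
  by_cases h : j = m <;> simp [coordCLM, lopFunctional, h]

theorem Lbar_conj_coord : Lbar m (fun x => conj (x.2 j)) p = if j = m then 1 else 0 := by
  rw [show (fun x : Heis n => conj (x.2 j)) = conjCLE.toContinuousLinearMap.comp (coordCLM j)
    from rfl, Lbar_clm]
  by_cases h : j = m <;> simp [coordCLM, lbarFunctional, h]

theorem Lop_ofReal_fst : Lop m (fun x => (x.1 : ℂ)) p = I * conj (p.2 m) := by
  rw [show (fun x : Heis n => (x.1 : ℂ)) = ofRealCLM.comp (ContinuousLinearMap.fst ℝ ℝ _)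
    from rfl, Lop_clm]
  simp [lopFunctional]

theorem Lbar_ofReal_fst : Lbar m (fun x => (x.1 : ℂ)) p = -I * p.2 m := by
  rw [show (fun x : Heis n => (x.1 : ℂ)) = ofRealCLM.comp (ContinuousLinearMap.fst ℝ ℝ _)
    from rfl, Lbar_clm]
  simp [lbarFunctional]

theorem Lop_sF : Lop m (fun x => (sF x : ℂ)) p = conj (p.2 m) := by
  have h (j : Fin n) : Lop m (fun x => x.2 j * conj (x.2 j)) p
      = (if j = m then 1 else 0) * conj (p.2 j) := by
    rw [Lop_mul (by fun_prop) (by fun_prop), Lop_coord, Lop_conj_coord, mul_zero, add_zero]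
  simp only [ofReal_sF]
  rw [Lop_sum _ fun j _ => by fun_prop]
  simp [h]

theorem Lbar_sF : Lbar m (fun x => (sF x : ℂ)) p = p.2 m := by
  have h (j : Fin n) : Lbar m (fun x => x.2 j * conj (x.2 j)) p
      = p.2 j * (if j = m then 1 else 0) := by
    rw [Lbar_mul (by fun_prop) (by fun_prop), Lbar_coord, Lbar_conj_coord, zero_mul, zero_add]
  simp only [ofReal_sF]
  rw [Lbar_sum _ fun j _ => by fun_prop]
  simp [h]

theorem Lop_wF : Lop m wF p = 2 * I * conj (p.2 m) := by
  rw [show wF = fun x : Heis n => (x.1 : ℂ) + I * (sF x : ℂ) from rfl,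
    Lop_add (by fun_prop) (by fun_prop), Lop_const_mul _ (by fun_prop), Lop_ofReal_fst, Lop_sF]
  ring

theorem Lbar_wF : Lbar m wF p = 0 := by
  rw [show wF = fun x : Heis n => (x.1 : ℂ) + I * (sF x : ℂ) from rfl,
    Lbar_add (by fun_prop) (by fun_prop), Lbar_const_mul _ (by fun_prop), Lbar_ofReal_fst, Lbar_sF]
  ring

end Generators

section Component

variable (ν k : Fin n) (l : ℕ)

def uFactor (g : ℂ → ℂ) (e : ℤ) (x : Heis n) : ℂ :=
  g (wF x) * x.2 ν ^ l * (sF x : ℂ) ^ e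

def uComponent (g : ℂ → ℂ) (e : ℤ) (x : Heis n) : ℂ := uFactor ν l g e x * conj (x.2 k)

variable {ν k l} {g : ℂ → ℂ} (e : ℤ) {x : Heis n}

theorem differentiableAt_uFactor (hg : Differentiable ℂ g) (hx : sF x ≠ 0) :
    DifferentiableAt ℝ (uFactor ν l g e) x := by
  have := hg.restrictScalars ℝ
  have := differentiableAt_ofReal_sF_zpow e hx
  unfold uFactor
  fun_prop

theorem differentiableAt_uComponent (hg : Differentiable ℂ g) (hx : sF x ≠ 0) :
    DifferentiableAt ℝ (uComponent ν k l g e) x := by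
  have := differentiableAt_uFactor (ν := ν) (l := l) e hg hx
  unfold uComponent
  fun_prop

theorem ofReal_sF_mul_uFactor_sub_one (hx : sF x ≠ 0) :
    (sF x : ℂ) * uFactor ν l g (e - 1) x = uFactor ν l g e x := by
  have hS : (sF x : ℂ) ≠ 0 := ofReal_ne_zero.mpr hx
  rw [uFactor, uFactor, zpow_sub_one₀ hS]
  field_simp

theorem ofReal_sF_mul_uComponent_sub_one (hx : sF x ≠ 0) :
    (sF x : ℂ) * uComponent ν k l g (e - 1) x = uComponent ν k l g e x := by
  rw [uComponent, uComponent, ← ofReal_sF_mul_uFactor_sub_one e hx]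
  ring

variable (m : Fin n)

theorem Lbar_uFactor (hg : Differentiable ℂ g) (hx : sF x ≠ 0) :
    Lbar m (uFactor ν l g e) x = e * x.2 m * uFactor ν l g (e - 1) x := by
  have hS : (sF x : ℂ) ≠ 0 := ofReal_ne_zero.mpr hx
  have := hg.restrictScalars ℝ
  have := differentiableAt_ofReal_sF_zpow e hx
  unfold uFactor
  rw [Lbar_mul (by fun_prop) (by fun_prop), Lbar_mul (by fun_prop) (by fun_prop),
    Lbar_comp (hg _) (by fun_prop), Lbar_wF, Lbar_comp (differentiableAt_pow l) (by fun_prop),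
    Lbar_coord, Lbar_comp (differentiableAt_zpow.mpr (Or.inl hS)) (by fun_prop), Lbar_sF,
    deriv_zpow]
  ring

theorem Lop_uFactor (hg : Differentiable ℂ g) (hx : sF x ≠ 0) :
    Lop m (uFactor ν l g e) x = 2 * I * conj (x.2 m) * uFactor ν l (deriv g) e x
      + e * conj (x.2 m) * uFactor ν l g (e - 1) x
      + if ν = m then l * x.2 ν ^ (l - 1) * (g (wF x) * (sF x : ℂ) ^ e) else 0 := by
  have hS : (sF x : ℂ) ≠ 0 := ofReal_ne_zero.mpr hx
  have := hg.restrictScalars ℝ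
  have := differentiableAt_ofReal_sF_zpow e hx
  unfold uFactor
  rw [Lop_mul (by fun_prop) (by fun_prop), Lop_mul (by fun_prop) (by fun_prop),
    Lop_comp (hg _) (by fun_prop), Lop_wF, Lop_comp (differentiableAt_pow l) (by fun_prop),
    Lop_coord, Lop_comp (differentiableAt_zpow.mpr (Or.inl hS)) (by fun_prop), Lop_sF,
    deriv_zpow, deriv_pow_field]
  split_ifs <;> ring

theorem Lbar_uComponent (hg : Differentiable ℂ g) (hx : sF x ≠ 0) :
    Lbar m (uComponent ν k l g e) x
      = e * x.2 m * uComponent ν k l g (e - 1) x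
        + (if k = m then 1 else 0) * uFactor ν l g e x := by
  unfold uComponent
  rw [Lbar_mul (differentiableAt_uFactor e hg hx) (by fun_prop), Lbar_uFactor e m hg hx,
    Lbar_conj_coord]
  ring

theorem Lop_uComponent (hg : Differentiable ℂ g) (hx : sF x ≠ 0) :
    Lop m (uComponent ν k l g e) x = 2 * I * conj (x.2 m) * uComponent ν k l (deriv g) e x
      + e * conj (x.2 m) * uComponent ν k l g (e - 1) x
      + if ν = m then l * x.2 ν ^ (l - 1) * (g (wF x) * (sF x : ℂ) ^ e) * conj (x.2 k)
        else 0 := by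
  unfold uComponent
  rw [Lop_mul (differentiableAt_uFactor e hg hx) (by fun_prop), Lop_uFactor e m hg hx,
    Lop_conj_coord]
  split_ifs <;> ring

theorem Lop_Lbar_uComponent (hkν : k ≠ ν) (hg : Differentiable ℂ g) (hx : sF x ≠ 0) :
    Lop m (Lbar m (uComponent ν k l g e)) x
      = e * (uComponent ν k l g (e - 1) x + x.2 m * conj (x.2 m)
          * (2 * I * uComponent ν k l (deriv g) (e - 1) x
            + (e - 1) * uComponent ν k l g (e - 1 - 1) x))
        + (e * (if ν = m then l * uComponent ν k l g (e - 1) x else 0)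
          + if k = m
            then 2 * I * uComponent ν k l (deriv g) e x + e * uComponent ν k l g (e - 1) x
            else 0) := by
  have hnear : ∀ᶠ y in nhds x, sF y ≠ 0 :=
    differentiable_sF.continuous.continuousAt.eventually_ne hx
  have hLbar : Lbar m (uComponent ν k l g e) =ᶠ[nhds x] fun y =>
      e * (y.2 m * uComponent ν k l g (e - 1) y)
        + (if k = m then 1 else 0) * uFactor ν l g e y := by
    filter_upwards [hnear] with y hy
    rw [Lbar_uComponent e m hg hy]
    ring
  have := differentiableAt_uComponent (ν := ν) (k := k) (l := l) (e - 1) hg hx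
  have := differentiableAt_uFactor (ν := ν) (l := l) e hg hx
  rw [Lop_congr hLbar, Lop_add (by fun_prop) (by fun_prop), Lop_const_mul _ (by fun_prop),
    Lop_mul (by fun_prop) (by fun_prop), Lop_const_mul _ (by fun_prop), Lop_coord,
    Lop_uComponent _ m hg hx, Lop_uFactor e m hg hx, if_pos rfl]
  by_cases hνm : ν = m
  · subst hνm
    have hpow : x.2 ν * (l * x.2 ν ^ (l - 1)) = l * x.2 ν ^ l := by
      rcases Nat.eq_zero_or_pos l with rfl | hl
      · simp
      · rw [← mul_pow_sub_one hl.ne']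
        ring
    simp only [if_neg hkν, if_true, uComponent, uFactor]
    push_cast
    linear_combination (e * (g (wF x) * (sF x : ℂ) ^ (e - 1)) * conj (x.2 k)) * hpow
  by_cases hkm : k = m
  · subst hkm
    simp only [if_neg hνm, if_true, uComponent]
    push_cast
    ring
  · simp only [if_neg hνm, if_neg hkm, uComponent]
    push_cast
    ring

theorem Lbar_Lop_uComponent (hkm : k ≠ m) (hνm : ν ≠ m) (hg : Differentiable ℂ g)
    (hg' : Differentiable ℂ (deriv g)) (hx : sF x ≠ 0) :
    Lbar m (Lop m (uComponent ν k l g e)) x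
      = e * (uComponent ν k l g (e - 1) x + x.2 m * conj (x.2 m)
          * (2 * I * uComponent ν k l (deriv g) (e - 1) x
            + (e - 1) * uComponent ν k l g (e - 1 - 1) x))
        + 2 * I * uComponent ν k l (deriv g) e x := by
  have hnear : ∀ᶠ y in nhds x, sF y ≠ 0 :=
    differentiable_sF.continuous.continuousAt.eventually_ne hx
  have hLop : Lop m (uComponent ν k l g e) =ᶠ[nhds x] fun y =>
      2 * I * (conj (y.2 m) * uComponent ν k l (deriv g) e y)
        + e * (conj (y.2 m) * uComponent ν k l g (e - 1) y) := by
    filter_upwards [hnear] with y hy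
    rw [Lop_uComponent e m hg hy, if_neg hνm]
    ring
  have := differentiableAt_uComponent (ν := ν) (k := k) (l := l) e hg' hx
  have := differentiableAt_uComponent (ν := ν) (k := k) (l := l) (e - 1) hg hx
  rw [Lbar_congr hLop, Lbar_add (by fun_prop) (by fun_prop), Lbar_const_mul _ (by fun_prop),
    Lbar_const_mul _ (by fun_prop), Lbar_mul (by fun_prop) (by fun_prop),
    Lbar_mul (by fun_prop) (by fun_prop), Lbar_conj_coord, Lbar_uComponent e m hg' hx,
    Lbar_uComponent _ m hg hx, if_pos rfl, if_neg hkm]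
  push_cast
  ring

theorem box_uComponent {q : ℕ} (hk : (k : ℕ) < q + 1) (hν : q + 1 ≤ (ν : ℕ))
    (hg : Differentiable ℂ g) (hg' : Differentiable ℂ (deriv g)) (hx : sF x ≠ 0) :
    (- ∑ m ∈ Finset.univ.filter (fun m : Fin n => ¬ ((m : ℕ) < q + 1 ∧ m ≠ k)),
        Lop m (Lbar m (uComponent ν k l g e)) x)
      - ∑ m ∈ Finset.univ.filter (fun m : Fin n => (m : ℕ) < q + 1 ∧ m ≠ k),
        Lbar m (Lop m (uComponent ν k l g e)) x
      = -(e * (n + l + e) * uComponent ν k l g (e - 1) x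
          + 2 * I * (q + 1 + e) * uComponent ν k l (deriv g) e x) := by
  have hkν : k ≠ ν := fun h => by rw [h] at hk; omega
  set F := uComponent ν k l g
  set F' := uComponent ν k l (deriv g)
  set X := 2 * I * F' (e - 1) x + (e - 1) * F (e - 1 - 1) x
  -- `A m` is common to both kinds of index; `B m` collects what only `m = ν` and `m = k` add.
  set A : Fin n → ℂ := fun m => e * (F (e - 1) x + x.2 m * conj (x.2 m) * X)
  set B : Fin n → ℂ := fun m => e * (if ν = m then l * F (e - 1) x else 0)
    + if k = m then 2 * I * F' e x + e * F (e - 1) x else 0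
  set M := Finset.univ.filter (fun m : Fin n => ¬ ((m : ℕ) < q + 1 ∧ m ≠ k))
  set J := Finset.univ.filter (fun m : Fin n => (m : ℕ) < q + 1 ∧ m ≠ k)
  have hM : ∀ m ∈ M, Lop m (Lbar m (F e)) x = A m + B m :=
    fun m _ => Lop_Lbar_uComponent e m hkν hg hx
  have hJ : ∀ m ∈ J, Lbar m (Lop m (F e)) x = A m + 2 * I * F' e x := fun m hm =>
    Lbar_Lop_uComponent e m (fun h => by simp [J, ← h] at hm)
      (fun h => by simp [J, ← h] at hm; omega) hg hg' hx
  have hA : ∑ m ∈ M, A m + ∑ m ∈ J, A m = e * (n * F (e - 1) x + sF x * X) := by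
    rw [Finset.sum_filter_not_add_sum_filter]
    simp only [A, Finset.sum_add_distrib, ← Finset.mul_sum, ← Finset.sum_mul, ofReal_sF]
    simp
  have hB : ∑ m ∈ M, B m = e * l * F (e - 1) x + (2 * I * F' e x + e * F (e - 1) x) := by
    have hνM : ν ∈ M := by simp [M]; omega
    have hkM : k ∈ M := by simp [M]
    simp only [B, Finset.sum_add_distrib, ← Finset.mul_sum, Finset.sum_ite_eq, if_pos hνM,
      if_pos hkM]
    ring
  rw [Finset.sum_congr rfl hM, Finset.sum_congr rfl hJ, Finset.sum_add_distrib (f := A),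
    Finset.sum_add_distrib (f := A), Finset.sum_const, card_filter_val_lt_and_ne hk (by omega),
    nsmul_eq_mul]
  have hF' : (sF x : ℂ) * F' (e - 1) x = F' e x := ofReal_sF_mul_uComponent_sub_one e hx
  have hF : (sF x : ℂ) * F (e - 1 - 1) x = F (e - 1) x := ofReal_sF_mul_uComponent_sub_one _ hx
  linear_combination -hA - hB - e * 2 * I * hF' - e * (e - 1) * hF

end Component

-- `J = {1,…,q+1}` is 0-indexed as `{0,…,q}`, so the sign `(-1)^{k-1}` of the paper becomes
-- `(-1)^k`, and `z^n` is the coordinate `n - 1`.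
/-- Lemma 2.1 of the paper: `u_h = h(w)(z^n)^l s^{-(q+1)} ξ^J` is an eigenform of the Kohn
Laplacian with eigenvalue `(q+1)(n+l-q-1)/s`, computed componentwise via the Folland–Stein
formula `□_b(f_{\bar I} d\bar z^I) = -Σ_{k∉I} L_k \bar L_k f_{\bar I} - Σ_{k∈I} \bar L_k L_k f_{\bar I}`.
Here the component of `u_h` along `d\bar z^{J∖k}` (with `J = {1,…,q+1}`, `0`-indexed as
`{0,…,q}`) is `f = (-1)^k h(w) (z^n)^l s^{-(q+1)} \bar z^k`. -/
theorem box_b_eigenform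
    (n : ℕ) (q : ℕ) (hq2 : q + 2 ≤ n)
    (l : ℕ)
    (h : ℂ → ℂ) (hh : Differentiable ℂ h)
    (k : Fin n) (hk : (k : ℕ) < q + 1)
    (p : Heis n) (hp : 0 < sF p) :
    (- ∑ m ∈ Finset.univ.filter (fun m : Fin n => ¬ ((m : ℕ) < q + 1 ∧ m ≠ k)),
        Lop m (Lbar m (fun x =>
          (-1 : ℂ) ^ (k : ℕ) * h (wF x) * (x.2 ⟨n - 1, by omega⟩) ^ l
            * ((sF x : ℂ)) ^ (-(q : ℤ) - 1) * (starRingEnd ℂ) (x.2 k))) p)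
      - ∑ m ∈ Finset.univ.filter (fun m : Fin n => (m : ℕ) < q + 1 ∧ m ≠ k),
        Lbar m (Lop m (fun x =>
          (-1 : ℂ) ^ (k : ℕ) * h (wF x) * (x.2 ⟨n - 1, by omega⟩) ^ l
            * ((sF x : ℂ)) ^ (-(q : ℤ) - 1) * (starRingEnd ℂ) (x.2 k))) p
      = (((q : ℂ) + 1) * ((n : ℂ) + (l : ℂ) - (q : ℂ) - 1) / (sF p : ℂ))
        * ((-1 : ℂ) ^ (k : ℕ) * h (wF p) * (p.2 ⟨n - 1, by omega⟩) ^ l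
            * ((sF p : ℂ)) ^ (-(q : ℤ) - 1) * (starRingEnd ℂ) (p.2 k)) := by
  have hg : Differentiable ℂ fun z => (-1 : ℂ) ^ (k : ℕ) * h z := hh.const_mul _
  have hF := ofReal_sF_mul_uComponent_sub_one (ν := ⟨n - 1, by omega⟩) (k := k) (l := l)
    (g := fun z => (-1 : ℂ) ^ (k : ℕ) * h z) (-(q : ℤ) - 1) hp.ne'
  refine (box_uComponent _ hk (by simp only; omega) hg hg.deriv hp.ne').trans ?_
  change _ = _ * uComponent ⟨n - 1, by omega⟩ k l (fun z => (-1 : ℂ) ^ (k : ℕ) * h z)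
    (-(q : ℤ) - 1) p
  rw [div_mul_eq_mul_div, eq_div_iff (ofReal_ne_zero.mpr hp.ne')]
  push_cast
  linear_combination ((q + 1) * (n + l - q - 1) : ℂ) * hF

end
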